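/- arXiv:1802.01461 — 8 statements merged into one kernel-verified Lean document; each statement's English description precedes it below -/
import Mathlib

section
/- Let x : ℤ → Σ be a bi-infinite recurrent sequence over a finite alphabet Σ (every finite factor that appears in x appears infinitely often, with bounded gaps not required). For every factor v of x of length N appearing at position s, and every positive integer q, there exists an integer t > 0 such that v appears again in x at position s + q·t; i.e., x(s+i) = x(s+qt+i) for all 0 ≤ i < N. -/
/-!
Recurrence gives, for every `L`, a positive return time `d` of the window `x[s, s + L)`. A return
time of the window of length `N + c` plus a return time `c ≥ 0` of the window of length `N` is
again a return time of the latter. So `e₀ = 0`, `eₖ₊₁ = eₖ + dₖ`, with `dₖ` a positive return time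
of the window of length `N + eₖ`, is increasing and every difference `eⱼ - eᵢ` with `i ≤ j` is a
return time of the window of length `N`; by pigeonhole two of the `eₖ` are congruent modulo `q`.
-/

section ReturnTimes

variable {A : Type*} (x : ℤ → A) (s : ℤ)

def IsReturnTime (L : ℕ) (d : ℤ) : Prop :=
  ∀ i : ℕ, i < L → x (s + d + i) = x (s + i)

namespace IsReturnTime

variable {x s}

theorem zero (L : ℕ) : IsReturnTime x s L 0 := by
  simp [IsReturnTime]

theorem mono {L L' : ℕ} {d : ℤ} (h : IsReturnTime x s L d) (hL : L' ≤ L) :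
    IsReturnTime x s L' d :=
  fun i hi => h i (hi.trans_le hL)

theorem add {L n : ℕ} {d : ℤ} (hd : IsReturnTime x s (L + n) d) (hn : IsReturnTime x s L n) :
    IsReturnTime x s L (d + n) := by
  intro i hi
  calc x (s + (d + n) + i) = x (s + d + (n + i : ℕ)) := by push_cast; ring_nf
    _ = x (s + (n + i : ℕ)) := hd _ (by omega)
    _ = x (s + n + i) := by push_cast; ring_nf
    _ = x (s + i) := hn i hi

end IsReturnTime

theorem exists_pos_isReturnTime
    (hrec : ∀ (s : ℤ) (N : ℕ) (M : ℤ), ∃ p : ℤ, p > M ∧ ∀ i : ℕ, i < N → x (p + i) = x (s + i))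
    (L : ℕ) : ∃ d : ℕ, 0 < d ∧ IsReturnTime x s L d := by
  obtain ⟨p, hp, hocc⟩ := hrec s L s
  refine ⟨(p - s).toNat, by omega, fun i hi => ?_⟩
  rw [Int.toNat_of_nonneg (by omega), add_sub_cancel]
  exact hocc i hi

def returnChain (r : ℕ → ℕ) (N : ℕ) : ℕ → ℕ
  | 0 => 0
  | k + 1 => returnChain r N k + r (N + returnChain r N k)

section returnChain

variable {x s} {r : ℕ → ℕ} {N : ℕ}

theorem returnChain_monotone : Monotone (returnChain r N) :=
  monotone_nat_of_le_succ fun _ => Nat.le_add_right _ _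

theorem returnChain_strictMono (hpos : ∀ L, 0 < r L) : StrictMono (returnChain r N) :=
  strictMono_nat_of_lt_succ fun _ => Nat.lt_add_of_pos_right (hpos _)

theorem isReturnTime_returnChain_sub (hr : ∀ L, IsReturnTime x s L (r L)) {i j : ℕ}
    (hij : i ≤ j) : IsReturnTime x s N (returnChain r N j - returnChain r N i : ℕ) := by
  induction j, hij using Nat.le_induction with
  | base => simpa using IsReturnTime.zero N
  | succ j hij ih =>
    have hle : returnChain r N i ≤ returnChain r N j := returnChain_monotone hij
    have hsplit : ((returnChain r N (j + 1) - returnChain r N i : ℕ) : ℤ) =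
        r (N + returnChain r N j) + (returnChain r N j - returnChain r N i : ℕ) := by
      simp only [returnChain]
      omega
    rw [hsplit]
    exact ((hr _).mono (by omega)).add ih

end returnChain

end ReturnTimes

theorem stmt_0_general {A : Type*} (x : ℤ → A)
    (hrec : ∀ (s : ℤ) (N : ℕ) (M : ℤ), ∃ p : ℤ, p > M ∧
      ∀ i : ℕ, i < N → x (p + i) = x (s + i))
    (s : ℤ) (N : ℕ) (q : ℤ) (hq : 0 < q) :
    ∃ t : ℤ, 0 < t ∧ ∀ i : ℕ, i < N → x (s + i) = x (s + q * t + i) := by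
  choose r hpos hr using exists_pos_isReturnTime x s hrec
  have hmono := returnChain_strictMono (N := N) hpos
  lift q to ℕ using hq.le
  obtain ⟨_, ⟨i, rfl⟩, _, ⟨j, rfl⟩, hlt, hmod⟩ :=
    Nat.exists_lt_modEq_of_infinite (Set.infinite_range_of_injective hmono.injective)
      (k := q) (by omega)
  obtain ⟨t, ht⟩ := (Nat.modEq_iff_dvd' hlt.le).mp hmod
  have hret := isReturnTime_returnChain_sub (N := N) hr (hmono.lt_iff_lt.mp hlt).le
  rw [ht] at hret
  refine ⟨t, ?_, fun k hk => by simpa using (hret k hk).symm⟩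
  have hqt : 0 < q * t := by omega
  exact_mod_cast Nat.pos_of_mul_pos_left hqt

/-- Recurrence lemma: in a recurrent bi-infinite sequence, every factor of
length `N` at position `s` reappears at a position `s + q*t` with `t > 0`. -/
theorem stmt_0 {A : Type*} [Fintype A] (x : ℤ → A)
    (hrec : ∀ (s : ℤ) (N : ℕ) (M : ℤ), ∃ p : ℤ, p > M ∧
      ∀ i : ℕ, i < N → x (p + i) = x (s + i))
    (s : ℤ) (N : ℕ) (q : ℤ) (hq : 0 < q) :
    ∃ t : ℤ, 0 < t ∧ ∀ i : ℕ, i < N → x (s + i) = x (s + q * t + i) :=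
  stmt_0_general x hrec s N q hq
end

section
/- Let x : ℤ → Σ be a bi-infinite uniformly recurrent (quasiperiodic) sequence over a finite alphabet. Then for all positive integers q and N there exists L = L(x, N, q) such that for every position s, the factor of length N at position s reappears at some position s + qt with 0 < qt < L. In particular the bound L does not depend on s. -/
/-!
Let `σ` be the shift. A minimal closed `σ^q`-invariant subset `M` of the orbit closure of `x`
(Zorn) consists of `σ^q`-recurrent points, and so do its translates `σ^j M`, `j < q`; their
union `Y` is compact and contains the forward `σ`-orbit of any point of `M`. Uniform recurrence
puts every `σ^s x` in the closure of that orbit, hence in `Y`. Covering the compact set `Y` by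
the open sets of points whose first `N` letters recur after `σ^(q t)` for a fixed `t`, finitely
many return times serve all of `Y`, which gives the bound `L`.
-/

open Set Function Filter Topology SymbolicDynamics.FullShift

section Recurrence

variable {X : Type*}

theorem iterate_mem_biUnion_image_of_mapsTo {g : X → X} {q : ℕ} (hq : 0 < q) {M : Set X}
    (hM : MapsTo g^[q] M M) {z : X} (hz : z ∈ M) (n : ℕ) :
    g^[n] z ∈ ⋃ j ∈ Finset.range q, g^[j] '' M := by
  refine mem_biUnion (Finset.mem_range.2 (n.mod_lt hq)) ⟨(g^[q])^[n / q] z, hM.iterate _ hz, ?_⟩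
  rw [← iterate_mul, ← iterate_add_apply, Nat.mod_add_div]

variable [TopologicalSpace X]

def IsRecurrentPt (f : X → X) (u : X) : Prop :=
  u ∈ closure (range fun n : ℕ => f^[n + 1] u)

def IsNonemptyClosedInvariant (f : X → X) (K : Set X) : Prop :=
  K.Nonempty ∧ IsClosed K ∧ MapsTo f K K

theorem IsNonemptyClosedInvariant.exists_minimal_subset [CompactSpace X] {f : X → X} {C : Set X}
    (hC : IsNonemptyClosedInvariant f C) :
    ∃ M ⊆ C, Minimal (IsNonemptyClosedInvariant f) M := by
  refine zorn_superset_nonempty {K | IsNonemptyClosedInvariant f K}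
    (fun c hc hchain hcne => ?_) C hC
  have : Nonempty c := hcne.to_subtype
  refine ⟨⋂₀ c, ⟨?_, isClosed_sInter fun K hK => (hc hK).2.1, ?_⟩,
    fun K hK => sInter_subset_of_mem hK⟩
  · exact IsCompact.nonempty_sInter_of_directed_nonempty_isCompact_isClosed
      (IsChain.directedOn (r := fun s t : Set X => s ⊇ t) hchain.symm) (fun K hK => (hc hK).1)
      (fun K hK => (hc hK).2.1.isCompact) (fun K hK => (hc hK).2.1)
  · exact mapsTo_sInter.2 fun K hK => (hc hK).2.2.mono_left (sInter_subset_of_mem hK)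

theorem isRecurrentPt_of_mem_minimal {f : X → X} (hf : Continuous f) {M : Set X}
    (hM : Minimal (IsNonemptyClosedInvariant f) M) {u : X} (hu : u ∈ M) :
    IsRecurrentPt f u := by
  set O := closure (range fun n : ℕ => f^[n + 1] u)
  have hOM : O ⊆ M :=
    closure_minimal (range_subset_iff.2 fun n => hM.prop.2.2.iterate (n + 1) hu) hM.prop.2.1
  have hO : IsNonemptyClosedInvariant f O := by
    refine ⟨⟨_, subset_closure ⟨0, rfl⟩⟩, isClosed_closure, MapsTo.closure ?_ hf⟩
    rintro _ ⟨n, rfl⟩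
    exact ⟨n + 1, iterate_succ_apply' f (n + 1) u⟩
  show u ∈ O
  rw [hM.eq_of_subset hO hOM]
  exact hu

theorem IsRecurrentPt.apply_of_commute {f g : X → X} {u : X} (hu : IsRecurrentPt f u)
    (hg : Continuous g) (hgf : Function.Commute g f) : IsRecurrentPt f (g u) := by
  refine MapsTo.closure ?_ hg hu
  rintro _ ⟨n, rfl⟩
  exact ⟨n, ((hgf.iterate_right (n + 1)).eq u).symm⟩

theorem IsCompact.exists_uniform_return {K : Set X} (hK : IsCompact K) {f : X → X}
    (hf : Continuous f) (hrec : ∀ u ∈ K, IsRecurrentPt f u) {V : Set (X × X)} (hV : IsOpen V)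
    (hdiag : ∀ u ∈ K, (u, u) ∈ V) :
    ∃ B : ℕ, ∀ u ∈ K, ∃ n, 0 < n ∧ n ≤ B ∧ (u, f^[n] u) ∈ V := by
  set W : ℕ → Set X := fun n => {u | (u, f^[n + 1] u) ∈ V}
  have hW : ∀ n, IsOpen (W n) := fun n =>
    hV.preimage (continuous_id.prodMk (hf.iterate (n + 1)))
  have hcover : K ⊆ ⋃ n, W n := by
    intro u hu
    have hnhds : {v | (u, v) ∈ V} ∈ 𝓝 u :=
      (hV.preimage (Continuous.prodMk_right u)).mem_nhds (hdiag u hu)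
    obtain ⟨_, hv, n, rfl⟩ := mem_closure_iff_nhds.1 (hrec u hu) _ hnhds
    exact mem_iUnion.2 ⟨n, hv⟩
  obtain ⟨t, ht⟩ := hK.elim_finite_subcover W hW hcover
  refine ⟨t.sup (· + 1), fun u hu => ?_⟩
  obtain ⟨n, hn, hu⟩ := mem_iUnion₂.1 (ht hu)
  exact ⟨n + 1, n.succ_pos, Finset.le_sup (f := (· + 1)) hn, hu⟩

theorem exists_isCompact_forall_isRecurrentPt_iterate [CompactSpace X] [T2Space X] {g : X → X}
    (hg : Continuous g) {q : ℕ} (hq : 0 < q) {C : Set X} (hC : IsNonemptyClosedInvariant g C) :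
    ∃ z ∈ C, ∃ Y : Set X,
      IsCompact Y ∧ (∀ u ∈ Y, IsRecurrentPt g^[q] u) ∧ ∀ n, g^[n] z ∈ Y := by
  obtain ⟨M, hMC, hM⟩ := IsNonemptyClosedInvariant.exists_minimal_subset
    (f := g^[q]) ⟨hC.1, hC.2.1, hC.2.2.iterate q⟩
  obtain ⟨z, hz⟩ := hM.prop.1
  refine ⟨z, hMC hz, ⋃ j ∈ Finset.range q, g^[j] '' M, ?_, ?_,
    iterate_mem_biUnion_image_of_mapsTo hq hM.prop.2.2 hz⟩
  · exact Finset.isCompact_biUnion _ fun j _ =>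
      hM.prop.2.1.isCompact.image (hg.iterate j)
  · simp only [mem_iUnion₂, mem_image]
    rintro _ ⟨j, -, m, hm, rfl⟩
    exact (isRecurrentPt_of_mem_minimal (hg.iterate q) hM hm).apply_of_commute
      (hg.iterate j) (Commute.iterate_iterate_self g j q)

end Recurrence

section Shift

variable {A : Type*}

def IsUniformlyRecurrent (x : ℤ → A) : Prop :=
  ∀ n : ℕ, ∃ m : ℕ, ∀ s t : ℤ, ∃ p : ℤ, t ≤ p ∧ p + n ≤ t + m ∧
    ∀ i : ℕ, i < n → x (p + i) = x (s + i)

theorem iterate_shift_one (n : ℕ) (u : ℤ → A) :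
    (shift (1 : ℤ))^[n] u = shift (n : ℤ) u := by
  induction n with
  | zero => simp
  | succ n ih => rw [iterate_succ_apply', ih, ← shift_add]; push_cast; rfl

variable [TopologicalSpace A]

theorem isNonemptyClosedInvariant_closure_range_shift (g : ℤ) (x : ℤ → A) :
    IsNonemptyClosedInvariant (shift g) (closure (range fun n : ℤ => shift n x)) := by
  refine ⟨⟨x, subset_closure ⟨0, shift_zero x⟩⟩, isClosed_closure,
    MapsTo.closure ?_ (continuous_shift g)⟩
  rintro _ ⟨n, rfl⟩
  exact ⟨n + g, shift_add n g x⟩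

variable [DiscreteTopology A]

theorem hasBasis_nhds_cylinder_Icc (y : ℤ → A) :
    (𝓝 y).HasBasis (fun _ : ℕ => True) fun K => cylinder (Finset.Icc (-K : ℤ) K) y := by
  refine ⟨fun S => ⟨fun hS => ?_, fun ⟨K, _, hK⟩ => mem_of_superset
    ((isOpen_cylinder _ y).mem_nhds fun _ _ => rfl) hK⟩⟩
  rw [nhds_pi, mem_pi'] at hS
  obtain ⟨I, t, ht, hIt⟩ := hS
  refine ⟨I.sup Int.natAbs, trivial, fun v hv => hIt fun i hi => ?_⟩
  have hiK : i.natAbs ≤ I.sup Int.natAbs := Finset.le_sup hi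
  rw [hv i (Finset.mem_Icc.2 ⟨by omega, by omega⟩)]
  simpa [nhds_discrete] using ht i

theorem isOpen_setOf_forall_lt_apply_eq (N : ℕ) :
    IsOpen {p : (ℤ → A) × (ℤ → A) | ∀ i : ℕ, i < N → p.1 i = p.2 i} := by
  have hV : {p : (ℤ → A) × (ℤ → A) | ∀ i : ℕ, i < N → p.1 i = p.2 i} =
      ⋂ i ∈ {i : ℕ | i < N}, {p | p.1 i = p.2 i} := by
    ext; simp
  rw [hV]
  refine (finite_lt_nat N).isOpen_biInter fun i _ => ?_
  exact (isOpen_discrete (diagonal A)).preimage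
    (f := fun p : (ℤ → A) × (ℤ → A) => (p.1 i, p.2 i)) (by fun_prop)

theorem IsUniformlyRecurrent.shift_mem_closure_range_shift {x : ℤ → A}
    (hx : IsUniformlyRecurrent x) {y : ℤ → A}
    (hy : y ∈ closure (range fun n : ℤ => shift n x)) (s : ℤ) :
    shift s x ∈ closure (range fun n : ℕ => shift (n : ℤ) y) := by
  rw [mem_closure_iff_nhds_basis (hasBasis_nhds_cylinder_Icc _)]
  intro K _
  obtain ⟨m, hm⟩ := hx (2 * K + 1)
  obtain ⟨_, ⟨t₀, rfl⟩, hyx⟩ :=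
    (mem_closure_iff_nhds_basis (hasBasis_nhds_cylinder_Icc y)).1 hy m trivial
  -- `y` copies `x` on `[t₀, t₀ + m]`, which contains the window of radius `K` around `s`
  obtain ⟨p, htp, hpm, hpx⟩ := hm (s - K) t₀
  refine ⟨_, ⟨(p + K - t₀).toNat, rfl⟩, fun k hk => ?_⟩
  obtain ⟨hk₁, hk₂⟩ := Finset.mem_Icc.1 hk
  have hwin := hyx ((p + K - t₀).toNat + k) (Finset.mem_Icc.2 ⟨by omega, by omega⟩)
  have hpk := hpx (k + K).toNat (by omega)
  simp only [shift_apply] at hwin ⊢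
  rw [← hwin]
  convert hpk using 2 <;> omega

end Shift

/-- In a uniformly recurrent sequence, for all positive `q` and all `N` there
is a bound `L` (independent of the position `s`) such that the factor of
length `N` at `s` reappears at `s + q*t` with `0 < q*t < L`. -/
theorem stmt_1 {A : Type*} [Fintype A] (x : ℤ → A)
    (hur : ∀ n : ℕ, ∃ m : ℕ, ∀ s t : ℤ, ∃ p : ℤ, t ≤ p ∧ p + n ≤ t + m ∧
      ∀ i : ℕ, i < n → x (p + i) = x (s + i))
    (q : ℤ) (hq : 0 < q) (N : ℕ) :
    ∃ L : ℤ, ∀ s : ℤ, ∃ t : ℤ, 0 < q * t ∧ q * t < L ∧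
      ∀ i : ℕ, i < N → x (s + i) = x (s + q * t + i) := by
  lift q to ℕ using hq.le
  let _ : TopologicalSpace A := ⊥
  have _ : DiscreteTopology A := ⟨rfl⟩
  obtain ⟨z, hz, Y, hYc, hYrec, horb⟩ := exists_isCompact_forall_isRecurrentPt_iterate
    (continuous_shift 1) (Int.natCast_pos.1 hq) (isNonemptyClosedInvariant_closure_range_shift 1 x)
  have hxY : ∀ s, shift s x ∈ Y := fun s =>
    closure_minimal (range_subset_iff.2 fun n => iterate_shift_one n z ▸ horb n) hYc.isClosed
      ((show IsUniformlyRecurrent x from hur).shift_mem_closure_range_shift hz s)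
  obtain ⟨B, hB⟩ := hYc.exists_uniform_return ((continuous_shift 1).iterate q) hYrec
    (isOpen_setOf_forall_lt_apply_eq N) fun _ _ _ _ => rfl
  refine ⟨q * B + 1, fun s => ?_⟩
  obtain ⟨t, ht, htB, hret⟩ := hB _ (hxY s)
  rw [← iterate_mul, iterate_shift_one] at hret
  refine ⟨t, by positivity, by nlinarith, fun i hi => ?_⟩
  simpa [add_assoc] using hret i hi
end

section
/- Let x : ℤ → Σ be a recurrent bi-infinite sequence and suppose a word v of length N occurs at position s in x. Then for every positive integer q, v occurs in x at infinitely many positions congruent to s modulo q. -/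
/-!
Recurrence lets one stack copies of a window: if `v` occurs at `s + (P j - P i)` for all
`i < j ≤ k`, take a far-away recurrence `t` of the window `x[s, s + N + P k - P 0)` and put
`P (k + 1) = P k + (t - s)`; then `v` also occurs at `s + (P (k + 1) - P i)`, which lies inside
the copy at `t`. With `q + 1` such offsets, two of them agree modulo `q`, and their difference
is a shift of `s` by a multiple of `q` at which `v` occurs.
-/

def OccursAt {A : Type*} (x : ℤ → A) (v : ℕ → A) (N : ℕ) (p : ℤ) : Prop :=
  ∀ i : ℕ, i < N → x (p + i) = v i

theorem OccursAt.of_agree {A : Type*} {x : ℤ → A} {v : ℕ → A} {N L : ℕ} {p s d : ℤ}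
    (hagree : ∀ i : ℕ, i < L → x (p + i) = x (s + i)) (hd : 0 ≤ d) (hdL : d + N ≤ L)
    (hv : OccursAt x v N (s + d)) : OccursAt x v N (p + d) := by
  lift d to ℕ using hd
  intro n hn
  have h := hagree (d + n) (by omega)
  push_cast at h
  rw [add_assoc, h, ← add_assoc]
  exact hv n hn

theorem exists_occurrence_chain {A : Type*} {x : ℤ → A}
    (hrec : ∀ (s : ℤ) (N : ℕ) (M : ℤ), ∃ p : ℤ, p > M ∧
      ∀ i : ℕ, i < N → x (p + i) = x (s + i))
    {v : ℕ → A} {N : ℕ} {s : ℤ} (hocc : OccursAt x v N s) {G : ℤ} (hG : 0 ≤ G) (k : ℕ) :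
    ∃ P : ℕ → ℤ, ∀ i j : ℕ, i < j → j ≤ k →
      G < P j - P i ∧ OccursAt x v N (s + (P j - P i)) := by
  induction k with
  | zero => exact ⟨fun _ => 0, fun i j hij hj => by omega⟩
  | succ k ih =>
    obtain ⟨P, hP⟩ := ih
    have hP0 : ∀ i ≤ k, P 0 ≤ P i := by
      intro i hi
      rcases i.eq_zero_or_pos with rfl | hi0
      · exact le_rfl
      · linarith [(hP 0 i hi0 hi).1]
    obtain ⟨t, ht, hagree⟩ := hrec s (N + (P k - P 0).toNat) (s + G)
    refine ⟨fun m => if m ≤ k then P m else P k + (t - s), fun i j hij hj => ?_⟩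
    rcases Nat.lt_or_ge k j with hkj | hjk
    · have hi : i ≤ k := by omega
      simp only [if_neg (show ¬ j ≤ k by omega), if_pos hi]
      rcases hi.lt_or_eq with hik | rfl
      · obtain ⟨hgap, hv⟩ := hP i k hik le_rfl
        refine ⟨by omega, ?_⟩
        have hwin := hv.of_agree hagree (by omega) (by have := hP0 i hi; omega)
        rwa [show t + (P k - P i) = s + (P k + (t - s) - P i) by ring] at hwin
      · refine ⟨by omega, ?_⟩
        have hwin := (show OccursAt x v N (s + 0) by simpa using hocc).of_agree hagree
          le_rfl (by omega)
        simpa using hwin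
    · simp only [if_pos hjk, if_pos (show i ≤ k by omega)]
      exact hP i j hij hjk

theorem exists_lt_le_intModEq (q : ℕ) (hq : 0 < q) (P : ℕ → ℤ) :
    ∃ i j : ℕ, i < j ∧ j ≤ q ∧ P i ≡ P j [ZMOD q] := by
  have : NeZero q := ⟨hq.ne'⟩
  obtain ⟨a, b, hab, heq⟩ := Fintype.exists_ne_map_eq_of_card_lt
    (fun i : Fin (q + 1) => (P i : ZMod q)) (by simp)
  have hmod := (ZMod.intCast_eq_intCast_iff _ _ _).mp heq
  rcases Fin.lt_or_lt_of_ne hab with h | h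
  · exact ⟨a, b, h, by omega, hmod⟩
  · exact ⟨b, a, h, by omega, hmod.symm⟩

theorem stmt_2_general {A : Type*} (x : ℤ → A)
    (hrec : ∀ (s : ℤ) (N : ℕ) (M : ℤ), ∃ p : ℤ, p > M ∧
      ∀ i : ℕ, i < N → x (p + i) = x (s + i))
    (N : ℕ) (v : ℕ → A) (s : ℤ)
    (hocc : ∀ i : ℕ, i < N → x (s + i) = v i)
    (q : ℤ) (hq : 0 < q) :
    ∀ M : ℤ, ∃ p : ℤ, p > M ∧ p % q = s % q ∧
      ∀ i : ℕ, i < N → x (p + i) = v i := by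
  intro M
  lift q to ℕ using hq.le
  obtain ⟨P, hP⟩ := exists_occurrence_chain hrec hocc (le_max_right (M - s) 0) q
  obtain ⟨i, j, hij, hjq, hmod⟩ := exists_lt_le_intModEq q (by exact_mod_cast hq) P
  obtain ⟨hgap, hv⟩ := hP i j hij hjq
  refine ⟨s + (P j - P i), by omega, ?_, hv⟩
  have hshift : s + (P j - P i) ≡ s + (P i - P i) [ZMOD q] :=
    (Int.ModEq.refl s).add (hmod.symm.sub_right (P i))
  rwa [sub_self, add_zero] at hshift

/-- In a recurrent sequence, a word `v` occurring at position `s` occurs at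
infinitely many positions congruent to `s` modulo `q`. -/
theorem stmt_2 {A : Type*} [Fintype A] (x : ℤ → A)
    (hrec : ∀ (s : ℤ) (N : ℕ) (M : ℤ), ∃ p : ℤ, p > M ∧
      ∀ i : ℕ, i < N → x (p + i) = x (s + i))
    (N : ℕ) (v : ℕ → A) (s : ℤ)
    (hocc : ∀ i : ℕ, i < N → x (s + i) = v i)
    (q : ℤ) (hq : 0 < q) :
    ∀ M : ℤ, ∃ p : ℤ, p > M ∧ p % q = s % q ∧
      ∀ i : ℕ, i < N → x (p + i) = v i :=
  stmt_2_general x hrec N v s hocc q hq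
end

section
/- Let x : ℤ → A be uniformly recurrent. Fix q > 0 and a word v of length N. If v occurs in x at some position congruent to i modulo q, then v occurs at a position congruent to i modulo q inside every window of x of length L, for some L depending only on x, N, and q. -/
/-- Key lemma: for a fixed position `p0`, the word `x[p0, p0+N)` occurs at a
position congruent to `p0` mod `q` in every window of some bounded length. -/
lemma stmt5_key {A : Type*} [Fintype A] (x : ℤ → A)
    (hur : ∀ n : ℕ, ∃ m : ℕ, ∀ s t : ℤ, ∃ p : ℤ, t ≤ p ∧ p + n ≤ t + m ∧
      ∀ j : ℕ, j < n → x (p + j) = x (s + j))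
    (q : ℤ) (hq : 0 < q) (N : ℕ) (p0 : ℤ) :
    ∃ L : ℕ, ∀ s : ℤ, ∃ p : ℤ, s ≤ p ∧ p + N ≤ s + L ∧ p % q = p0 % q ∧
      ∀ j : ℕ, j < N → x (p + j) = x (p0 + j) := by
  classical
  set n := q.toNat with hn
  have hnq : (n : ℤ) = q := Int.toNat_of_nonneg hq.le
  haveI : NeZero n := ⟨by omega⟩
  have hcast : ∀ a b : ℤ, ((a : ZMod n) = (b : ZMod n)) ↔ a % q = b % q := by
    intro a b
    rw [ZMod.intCast_eq_intCast_iff]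
    unfold Int.ModEq
    rw [hnq]
  -- `M r L` : the block of radius `L` centered at `p0` matches the block centered at `r`
  set M : ℤ → ℕ → Prop :=
    fun r L => ∀ j : ℤ, -(L : ℤ) ≤ j → j ≤ (L : ℤ) → x (r + j) = x (p0 + j) with hM
  have hMmono : ∀ r : ℤ, ∀ L L' : ℕ, L ≤ L' → M r L' → M r L := by
    intro r L L' h h' j h1 h2
    exact h' j (by omega) (by omega)
  set Rd : ℕ → Set (ZMod n) :=
    fun L => {d | ∃ r : ℤ, (r : ZMod n) = (p0 : ZMod n) + d ∧ M r L} with hRd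
  set G : Set (ZMod n) := {d | ∀ L : ℕ, d ∈ Rd L} with hG
  have h0 : (0 : ZMod n) ∈ G := by
    intro L
    exact ⟨p0, by push_cast; ring, fun j _ _ => rfl⟩
  have hadd : ∀ d1 d2 : ZMod n, d1 ∈ G → d2 ∈ G → d1 + d2 ∈ G := by
    intro d1 d2 h1 h2 L
    obtain ⟨r1, hr1, hM1⟩ := h1 L
    obtain ⟨r2, hr2, hM2⟩ := h2 (L + (r1 - p0).natAbs)
    refine ⟨r2 + (r1 - p0), ?_, ?_⟩
    · push_cast
      rw [hr1, hr2]
      ring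
    · intro j hj1 hj2
      have e1 : x (r2 + ((r1 - p0) + j)) = x (p0 + ((r1 - p0) + j)) :=
        hM2 ((r1 - p0) + j) (by omega) (by omega)
      have e2 : x (r1 + j) = x (p0 + j) := hM1 j hj1 hj2
      calc x (r2 + (r1 - p0) + j) = x (r2 + ((r1 - p0) + j)) := by ring_nf
        _ = x (p0 + ((r1 - p0) + j)) := e1
        _ = x (r1 + j) := by ring_nf
        _ = x (p0 + j) := e2
  have hsmul : ∀ (k : ℕ) (d : ZMod n), d ∈ G → (k • d) ∈ G := by
    intro k d hd
    induction k with
    | zero => simpa using h0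
    | succ k ih => rw [succ_nsmul]; exact hadd _ _ ih hd
  have hneg : ∀ d ∈ G, -d ∈ G := by
    intro d hd
    have h1 : (n • d) = 0 := by
      rw [nsmul_eq_mul, ZMod.natCast_self, zero_mul]
    have h2 : ((n - 1) • d) + d = 0 := by
      rw [← succ_nsmul]
      have : n - 1 + 1 = n := by omega
      rw [this]; exact h1
    have h3 : ((n - 1) • d) = -d := eq_neg_of_add_eq_zero_left h2
    exact h3 ▸ hsmul _ _ hd
  -- stabilization length
  set Ls : ZMod n → ℕ := fun d => if h : ∃ L, d ∉ Rd L then h.choose else 0 with hLs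
  set Lstar : ℕ := Finset.univ.sup Ls with hLstar
  have hstab : ∀ d : ZMod n, d ∈ Rd Lstar → d ∈ G := by
    intro d hd
    by_contra hg
    have h : ∃ L, d ∉ Rd L := by
      by_contra h
      push_neg at h
      exact hg h
    have hnot : d ∉ Rd (Ls d) := by
      simp only [hLs, dif_pos h]
      exact h.choose_spec
    apply hnot
    obtain ⟨r, hr, hMr⟩ := hd
    exact ⟨r, hr, hMmono r _ _ (Finset.le_sup (Finset.mem_univ d)) hMr⟩
  set L1 : ℕ := max Lstar N with hL1
  -- witnesses
  set rwit : ZMod n → ℤ := fun d => if h : d ∈ G then (h L1).choose else p0 with hrw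
  have hrwit : ∀ d ∈ G, ((rwit d : ℤ) : ZMod n) = (p0 : ZMod n) + d ∧ M (rwit d) L1 := by
    intro d hd
    simp only [hrw, dif_pos hd]
    exact (hd L1).choose_spec
  set B : ℕ := Finset.univ.sup (fun d => (rwit d - p0).natAbs) with hBdef
  have hB : ∀ d : ZMod n, (rwit d - p0).natAbs ≤ B := by
    intro d
    rw [hBdef]
    exact Finset.le_sup (f := fun d => (rwit d - p0).natAbs) (Finset.mem_univ d)
  set Lbig : ℕ := B + L1 with hLbig
  set nlen : ℕ := 2 * Lbig + 1 with hnlen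
  obtain ⟨m, hm⟩ := hur nlen
  refine ⟨m + 2 * B + N, ?_⟩
  intro s
  obtain ⟨p', hp1, hp2, hp3⟩ := hm (p0 - Lbig) (s + B)
  set c : ℤ := p' + (Lbig : ℤ) with hcdef
  have hc : M c Lbig := by
    intro j h1 h2
    have hjn : ((j + Lbig).toNat : ℤ) = j + Lbig := Int.toNat_of_nonneg (by omega)
    have hlt : (j + Lbig).toNat < nlen := by omega
    have := hp3 _ hlt
    have e1 : p' + ((j + Lbig).toNat : ℤ) = c + j := by omega
    have e2 : p0 - Lbig + ((j + Lbig).toNat : ℤ) = p0 + j := by omega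
    rw [e1, e2] at this
    exact this
  set d0 : ZMod n := ((c - p0 : ℤ) : ZMod n) with hd0def
  have hd0 : d0 ∈ G := by
    apply hstab
    refine ⟨c, by rw [hd0def]; push_cast; ring, ?_⟩
    exact hMmono c Lstar Lbig (by omega) hc
  have hnd0 : -d0 ∈ G := hneg _ hd0
  obtain ⟨hr1, hr2⟩ := hrwit _ hnd0
  set r : ℤ := rwit (-d0) with hrdef
  have hrB : (r - p0).natAbs ≤ B := hB _
  have hNL1 : N ≤ L1 := le_max_right _ _
  refine ⟨c + (r - p0), by omega, by push_cast at hp2 ⊢; omega, ?_, ?_⟩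
  · rw [← hcast]
    push_cast
    rw [hr1, hd0def]
    push_cast
    ring
  · intro j hj
    have hb1 : -(Lbig : ℤ) ≤ (r - p0) + j := by omega
    have hb2 : (r - p0) + j ≤ (Lbig : ℤ) := by omega
    have e1 : x (c + ((r - p0) + j)) = x (p0 + ((r - p0) + j)) := hc _ hb1 hb2
    have e2 : x (r + j) = x (p0 + j) := hr2 j (by omega) (by omega)
    calc x (c + (r - p0) + j) = x (c + ((r - p0) + j)) := by ring_nf
      _ = x (p0 + ((r - p0) + j)) := e1
      _ = x (r + j) := by ring_nf
      _ = x (p0 + j) := e2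

/-- In a uniformly recurrent sequence, if a word `v` of length `N` occurs at
some position congruent to `i` modulo `q`, then it occurs at a position
congruent to `i` modulo `q` in every window of length `L`, where `L` depends
only on `x`, `N` and `q`. -/
theorem stmt_5 {A : Type*} [Fintype A] (x : ℤ → A)
    (hur : ∀ n : ℕ, ∃ m : ℕ, ∀ s t : ℤ, ∃ p : ℤ, t ≤ p ∧ p + n ≤ t + m ∧
      ∀ j : ℕ, j < n → x (p + j) = x (s + j))
    (q : ℤ) (hq : 0 < q) (N : ℕ) :
    ∃ L : ℕ, ∀ (v : ℕ → A) (i : ℤ),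
      (∃ p : ℤ, p % q = i % q ∧ ∀ j : ℕ, j < N → x (p + j) = v j) →
      ∀ s : ℤ, ∃ p : ℤ, s ≤ p ∧ p + N ≤ s + L ∧ p % q = i % q ∧
        ∀ j : ℕ, j < N → x (p + j) = v j := by
  classical
  set n := q.toNat with hn
  have hnq : (n : ℤ) = q := Int.toNat_of_nonneg hq.le
  haveI : NeZero n := ⟨by omega⟩
  have hcast : ∀ a b : ℤ, ((a : ZMod n) = (b : ZMod n)) ↔ a % q = b % q := by
    intro a b
    rw [ZMod.intCast_eq_intCast_iff]
    unfold Int.ModEq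
    rw [hnq]
  set Hyp : (Fin N → A) × ZMod n → Prop := fun k =>
    ∃ p : ℤ, ((p : ZMod n) = k.2) ∧ ∀ (j : ℕ) (hj : j < N), x (p + j) = k.1 ⟨j, hj⟩
    with hHyp
  set F : (Fin N → A) × ZMod n → ℕ := fun k =>
    if h : Hyp k then (stmt5_key x hur q hq N h.choose).choose else 0 with hF
  refine ⟨Finset.univ.sup F, ?_⟩
  intro v i hyp s
  set k : (Fin N → A) × ZMod n := (fun j => v j, ((i : ZMod n))) with hk
  have hk2 : Hyp k := by
    obtain ⟨p, hp1, hp2⟩ := hyp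
    exact ⟨p, (hcast p i).2 hp1, fun j hj => hp2 j hj⟩
  obtain ⟨hp0r, hp0w⟩ := hk2.choose_spec
  obtain ⟨p, h1, h2, h3, h4⟩ := (stmt5_key x hur q hq N hk2.choose).choose_spec s
  have hFk : F k = (stmt5_key x hur q hq N hk2.choose).choose := by
    simp only [hF, dif_pos hk2]
  have hle : F k ≤ Finset.univ.sup F := Finset.le_sup (Finset.mem_univ k)
  refine ⟨p, h1, by omega, ?_, ?_⟩
  · have hp0i : (hk2.choose : ℤ) % q = i % q := (hcast _ _).1 hp0r
    omega
  · intro j hj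
    rw [h4 j hj]
    exact hp0w j hj
end

section
/- Let x : ℤ → Σ be uniformly recurrent over a finite alphabet. Then for every finite pattern v (of length N) occurring in x and every q > 0, there exist occurrences of v in x at positions congruent modulo q to the original occurrence both to the left and to the right of it; consequently there is a bi-infinite sequence of occurrences of v, at positions all congruent to each other modulo q, unbounded in both directions. -/
lemma rightLem {A : Type*} [Fintype A] (x : ℤ → A)
    (hur : ∀ n : ℕ, ∃ m : ℕ, ∀ s t : ℤ, ∃ p : ℤ, t ≤ p ∧ p + n ≤ t + m ∧
      ∀ i : ℕ, i < n → x (p + i) = x (s + i))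
    (N : ℕ) (v : ℕ → A) (s : ℤ)
    (hocc : ∀ i : ℕ, i < N → x (s + i) = v i)
    (q : ℤ) (hq : 0 < q) :
    ∀ M : ℤ, ∃ p : ℤ, p > M ∧ p % q = s % q ∧
      ∀ i : ℕ, i < N → x (p + i) = v i := by
  classical
  -- occurrences of each prefix are unbounded to the right
  have occ : ∀ n : ℕ, ∀ M : ℤ, ∃ p : ℤ, M < p ∧ ∀ i : ℕ, i < n → x (p + i) = x (s + i) := by
    intro n M
    obtain ⟨m, hm⟩ := hur n
    obtain ⟨p, hp1, _, hp3⟩ := hm s (M + 1)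
    exact ⟨p, by omega, hp3⟩
  -- residues at which prefix-n occurs unboundedly right
  set g : ℕ → Finset ℤ := fun n =>
    (Finset.Ico (0:ℤ) q).filter
      (fun r => ∀ M : ℤ, ∃ p : ℤ, M < p ∧ p % q = r ∧ ∀ i : ℕ, i < n → x (p + i) = x (s + i))
    with hg
  have hIcoNe : (Finset.Ico (0:ℤ) q).Nonempty := ⟨0, Finset.mem_Ico.mpr ⟨le_refl 0, hq⟩⟩
  have gne : ∀ n, (g n).Nonempty := by
    intro n
    by_contra hne
    rw [Finset.not_nonempty_iff_eq_empty] at hne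
    have hall : ∀ r : ℤ, ∃ M : ℤ, ∀ p : ℤ, M < p → p % q = r →
        ¬ ∀ i : ℕ, i < n → x (p + i) = x (s + i) := by
      intro r
      by_cases hr : r ∈ Finset.Ico (0:ℤ) q
      · by_contra hc
        push_neg at hc
        have hrg : r ∈ g n := by
          simp only [hg, Finset.mem_filter]
          refine ⟨hr, fun M => ?_⟩
          obtain ⟨p, h1, h2, h3⟩ := hc M
          exact ⟨p, h1, h2, h3⟩
        rw [hne] at hrg
        exact absurd hrg (Finset.notMem_empty r)
      · refine ⟨0, fun p _ hpr _ => hr ?_⟩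
        rw [← hpr]
        exact Finset.mem_Ico.mpr ⟨Int.emod_nonneg p (by omega), Int.emod_lt_of_pos p hq⟩
    choose F hF using hall
    obtain ⟨p, hp, hmatch⟩ := occ n ((Finset.Ico (0:ℤ) q).sup' hIcoNe F)
    have hrmem : p % q ∈ Finset.Ico (0:ℤ) q :=
      Finset.mem_Ico.mpr ⟨Int.emod_nonneg p (by omega), Int.emod_lt_of_pos p hq⟩
    exact hF (p % q) p (lt_of_le_of_lt (Finset.le_sup' F hrmem) hp) rfl hmatch
  have gmono : ∀ a b : ℕ, a ≤ b → g b ⊆ g a := by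
    intro a b hab r hrb
    simp only [hg, Finset.mem_filter] at hrb ⊢
    refine ⟨hrb.1, fun M => ?_⟩
    obtain ⟨p, h1, h2, h3⟩ := hrb.2 M
    exact ⟨p, h1, h2, fun i hi => h3 i (lt_of_lt_of_le hi hab)⟩
  obtain ⟨n0, hn0⟩ : ∃ n0 : ℕ, ∀ n : ℕ, n0 ≤ n → g n = g n0 := by
    have hmem : sInf (Set.range fun n => (g n).card) ∈ Set.range fun n => (g n).card :=
      Nat.sInf_mem ⟨(g 0).card, 0, rfl⟩
    obtain ⟨n0, hn0⟩ := hmem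
    refine ⟨n0, fun n hn => ?_⟩
    refine Finset.eq_of_subset_of_card_le (gmono n0 n hn) ?_
    exact le_trans (le_of_eq hn0) (Nat.sInf_le ⟨n, rfl⟩)
  obtain ⟨r, hr⟩ := gne n0
  have hrIco : 0 ≤ r ∧ r < q := by
    have h := hr
    simp only [hg, Finset.mem_filter, Finset.mem_Ico] at h
    exact ⟨h.1.1, h.1.2⟩
  have hrall : ∀ (n : ℕ) (M : ℤ), ∃ p : ℤ, M < p ∧ p % q = r ∧
      ∀ i : ℕ, i < n → x (p + i) = x (s + i) := by
    intro n M
    have h1 : r ∈ g (max n n0) := by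
      rw [hn0 (max n n0) (le_max_right _ _)]; exact hr
    have h2 : r ∈ g n := gmono n (max n n0) (le_max_left _ _) h1
    simp only [hg, Finset.mem_filter] at h2
    exact h2.2 M
  -- self-matching offsets with residue r - s
  have step2 : ∀ n : ℕ, ∃ o : ℤ, 0 ≤ o ∧ o % q = (r - s) % q ∧
      ∀ j : ℕ, j < n → x (s + o + j) = x (s + j) := by
    intro n
    obtain ⟨p, hp1, hp2, hp3⟩ := hrall n s
    refine ⟨p - s, by omega, ?_, ?_⟩
    · have h1 : Int.ModEq q p r := by
        show p % q = r % q
        rw [hp2, Int.emod_eq_of_lt hrIco.1 hrIco.2]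
      exact h1.sub_right s
    · intro j hj
      have e : s + (p - s) + (j:ℤ) = p + j := by ring
      rw [e]
      exact hp3 j hj
  -- composed offsets with residue k * (r - s)
  have step3 : ∀ (k : ℕ) (n : ℕ), ∃ o : ℤ, 0 ≤ o ∧ o % q = ((k : ℤ) * (r - s)) % q ∧
      ∀ j : ℕ, j < n → x (s + o + j) = x (s + j) := by
    intro k
    induction k with
    | zero => exact fun n => ⟨0, le_refl 0, by simp, fun j hj => by simp⟩
    | succ k ih =>
      intro n
      obtain ⟨o2, ho2a, ho2b, ho2c⟩ := ih n
      obtain ⟨o1, ho1a, ho1b, ho1c⟩ := step2 (n + o2.toNat)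
      refine ⟨o1 + o2, by omega, ?_, ?_⟩
      · have h1 : Int.ModEq q o1 (r - s) := ho1b
        have h2 : Int.ModEq q o2 ((k:ℤ) * (r - s)) := ho2b
        have h3 := h1.add h2
        have e : (r - s) + (k:ℤ) * (r - s) = (((k+1 : ℕ)) : ℤ) * (r - s) := by push_cast; ring
        rw [e] at h3
        exact h3
      · intro j hj
        have key := ho1c (o2.toNat + j) (by omega)
        have e1 : s + o1 + ((o2.toNat + j : ℕ) : ℤ) = s + (o1 + o2) + j := by
          push_cast [Int.toNat_of_nonneg ho2a]; ring
        have e2 : s + ((o2.toNat + j : ℕ) : ℤ) = s + o2 + j := by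
          push_cast [Int.toNat_of_nonneg ho2a]; ring
        rw [e1, e2] at key
        rw [key]
        exact ho2c j hj
  -- final assembly
  intro M
  set k : ℕ := q.toNat - 1 with hk
  obtain ⟨o, hoa, hob, hoc⟩ := step3 k N
  obtain ⟨p'', hp1, hp2, hp3⟩ := hrall (N + o.toNat) (M - o)
  refine ⟨p'' + o, by omega, ?_, ?_⟩
  · have h1 : Int.ModEq q p'' r := by
      show p'' % q = r % q
      rw [hp2, Int.emod_eq_of_lt hrIco.1 hrIco.2]
    have h2 : Int.ModEq q o ((k:ℤ) * (r - s)) := hob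
    have h3 := h1.add h2
    have hq' : (k:ℤ) + 1 = q := by omega
    have h4 : Int.ModEq q (r + (k:ℤ) * (r - s)) s := by
      refine Int.ModEq.symm (Int.modEq_iff_dvd.mpr ⟨r - s, ?_⟩)
      rw [← hq']; ring
    exact h3.trans h4
  · intro i hi
    have key := hp3 (o.toNat + i) (by omega)
    have e1 : p'' + ((o.toNat + i : ℕ) : ℤ) = p'' + o + i := by
      push_cast [Int.toNat_of_nonneg hoa]; ring
    have e2 : s + ((o.toNat + i : ℕ) : ℤ) = s + o + i := by
      push_cast [Int.toNat_of_nonneg hoa]; ring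
    rw [e1, e2] at key
    rw [key, hoc i hi]
    exact hocc i hi

/-- In a uniformly recurrent sequence, a word `v` occurring at position `s`
occurs at positions congruent to `s` modulo `q` unboundedly in both
directions. -/
theorem stmt_12 {A : Type*} [Fintype A] (x : ℤ → A)
    (hur : ∀ n : ℕ, ∃ m : ℕ, ∀ s t : ℤ, ∃ p : ℤ, t ≤ p ∧ p + n ≤ t + m ∧
      ∀ i : ℕ, i < n → x (p + i) = x (s + i))
    (N : ℕ) (v : ℕ → A) (s : ℤ)
    (hocc : ∀ i : ℕ, i < N → x (s + i) = v i)
    (q : ℤ) (hq : 0 < q) :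
    (∀ M : ℤ, ∃ p : ℤ, p > M ∧ p % q = s % q ∧
      ∀ i : ℕ, i < N → x (p + i) = v i) ∧
    (∀ M : ℤ, ∃ p : ℤ, p < M ∧ p % q = s % q ∧
      ∀ i : ℕ, i < N → x (p + i) = v i) := by
  constructor
  · exact rightLem x hur N v s hocc q hq
  · -- reverse the sequence and use the right-lemma
    set x' : ℤ → A := fun n => x (-n) with hx'
    have hur' : ∀ n : ℕ, ∃ m : ℕ, ∀ s₁ t₁ : ℤ, ∃ p₁ : ℤ, t₁ ≤ p₁ ∧ p₁ + n ≤ t₁ + m ∧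
        ∀ i : ℕ, i < n → x' (p₁ + i) = x' (s₁ + i) := by
      intro n
      obtain ⟨m, hm⟩ := hur n
      refine ⟨m, fun s₁ t₁ => ?_⟩
      obtain ⟨p₂, h1, h2, h3⟩ := hm (1 - n - s₁) (1 - t₁ - m)
      refine ⟨1 - n - p₂, by omega, by omega, ?_⟩
      intro i hi
      have hj : (n - 1 - i : ℕ) < n := by omega
      have key := h3 (n - 1 - i) hj
      simp only [hx']
      have e1 : -((1 - (n:ℤ) - p₂) + i) = p₂ + ((n - 1 - i : ℕ) : ℤ) := by omega
      have e2 : -(s₁ + (i:ℤ)) = (1 - n - s₁) + ((n - 1 - i : ℕ) : ℤ) := by omega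
      rw [e1, e2]
      exact key
    have hocc' : ∀ i : ℕ, i < N → x' ((1 - N - s) + i) = v (N - 1 - i) := by
      intro i hi
      simp only [hx']
      have e : -((1 - (N:ℤ) - s) + i) = s + ((N - 1 - i : ℕ) : ℤ) := by omega
      rw [e]
      exact hocc (N - 1 - i) (by omega)
    intro M
    obtain ⟨p', hp1, hp2, hp3⟩ :=
      rightLem x' hur' N (fun j => v (N - 1 - j)) (1 - N - s) hocc' q hq (1 - N - M)
    refine ⟨1 - N - p', by omega, ?_, ?_⟩
    · have h1 : Int.ModEq q p' (1 - N - s) := hp2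
      have h2 := (Int.ModEq.refl (1 - (N:ℤ))).sub h1
      have e : (1 - (N:ℤ)) - (1 - N - s) = s := by ring
      rw [e] at h2
      exact h2
    · intro i hi
      have key : x' (p' + ((N - 1 - i : ℕ) : ℤ)) = v (N - 1 - (N - 1 - i)) :=
        hp3 (N - 1 - i) (by omega)
      have e1 : N - 1 - (N - 1 - i) = i := by omega
      rw [e1] at key
      simp only [hx'] at key
      have e2 : -(p' + ((N - 1 - i : ℕ) : ℤ)) = (1 - N - p') + i := by omega
      rw [e2] at key
      exact key
end

section
/- In a self-similar subshift all configurations are aperiodic: suppose a ℤ²-shift S over alphabet τ has the property that there is an integer N > 1 and for every configuration in S a unique partition of ℤ² into N×N blocks such that the induced block configuration is again (isomorphic to) a configuration of S. Then no configuration of S has a nontrivial period vector. -/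
/-- In a self-similar subshift (with zoom factor `N > 1`, macro-tiles encoded
by `M : τ → ℤ → ℤ → τ` in bijection with `τ`, and a unique grid of `N×N`
blocks for each configuration), every configuration is aperiodic. -/
theorem stmt_13 {τ : Type*} [Fintype τ] [TopologicalSpace τ] [DiscreteTopology τ] (S : Set (ℤ × ℤ → τ))
    (hclosed : IsClosed (X := ℤ × ℤ → τ) S)
    (hinv : ∀ c : ℤ × ℤ, ∀ f ∈ S, (fun p : ℤ × ℤ => f (p + c)) ∈ S)
    (N : ℤ) (hN : 1 < N)
    (M : τ → ℤ → ℤ → τ)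
    (hMinj : ∀ t t' : τ,
      (∀ i j : ℤ, 0 ≤ i → i < N → 0 ≤ j → j < N → M t i j = M t' i j) →
      t = t')
    (hself : ∀ f ∈ S, ∃! ab : ℤ × ℤ,
      (0 ≤ ab.1 ∧ ab.1 < N ∧ 0 ≤ ab.2 ∧ ab.2 < N) ∧
      ∃ g ∈ S, ∀ x y : ℤ,
        f (x, y) = M (g ((x - ab.1).ediv N, (y - ab.2).ediv N))
          ((x - ab.1).emod N) ((y - ab.2).emod N)) :
    ∀ f ∈ S, ∀ c : ℤ × ℤ, c ≠ 0 → ¬ (∀ p : ℤ × ℤ, f (p + c) = f p) := by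
  have hN0 : N ≠ 0 := by omega
  have hNpos : 0 < N := by omega
  suffices H : ∀ n : ℕ, ∀ f ∈ S, ∀ c : ℤ × ℤ, c ≠ 0 →
      c.1.natAbs + c.2.natAbs = n → ¬ (∀ p : ℤ × ℤ, f (p + c) = f p) by
    intro f hf c hc
    exact H _ f hf c hc rfl
  intro n
  induction n using Nat.strong_induction_on with
  | _ n ih =>
  intro f hf c hc hn hper
  obtain ⟨⟨a, b⟩, ⟨⟨ha0, haN, hb0, hbN⟩, g, hg, hrep⟩, huniq⟩ := hself f hf
  have hde : ∀ x y : ℤ, x.ediv y = x / y := fun _ _ => rfl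
  have hme : ∀ x y : ℤ, x.emod y = x % y := fun _ _ => rfl
  simp only [hde, hme] at hrep huniq ⊢
  -- the shifted decomposition
  set qa := (a - c.1) / N with hqa
  set qb := (b - c.2) / N with hqb
  set a' := (a - c.1) % N with ha'
  set b' := (b - c.2) % N with hb'
  have hg' : (fun p : ℤ × ℤ => g (p + (-qa, -qb))) ∈ S := hinv _ g hg
  have hkey : ((a', b') : ℤ × ℤ) = (a, b) := by
    apply huniq
    refine ⟨⟨Int.emod_nonneg _ hN0, Int.emod_lt_of_pos _ hNpos,
      Int.emod_nonneg _ hN0, Int.emod_lt_of_pos _ hNpos⟩,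
      (fun p : ℤ × ℤ => g (p + (-qa, -qb))), hg', ?_⟩
    intro x y
    have hxa : x - a' = (x + c.1 - a) + N * qa := by
      rw [ha', Int.emod_def, hqa]; ring
    have hyb : y - b' = (y + c.2 - b) + N * qb := by
      rw [hb', Int.emod_def, hqb]; ring
    have hfd : ((x + c.1, y + c.2) : ℤ × ℤ) = (x, y) + c := by
      simp [Prod.ext_iff]
    calc f (x, y) = f (x + c.1, y + c.2) := by rw [hfd, hper]
      _ = M (g ((x + c.1 - a).ediv N, (y + c.2 - b).ediv N))
            ((x + c.1 - a).emod N) ((y + c.2 - b).emod N) := hrep _ _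
      _ = _ := by
            show _ = M (g ((x - a').ediv N - qa, (y - b').ediv N - qb))
              ((x - a').emod N) ((y - b').emod N)
            rw [show (x - a').ediv N = (x + c.1 - a).ediv N + qa from by
                rw [hxa]; exact Int.add_mul_ediv_left _ _ hN0,
              show (y - b').ediv N = (y + c.2 - b).ediv N + qb from by
                rw [hyb]; exact Int.add_mul_ediv_left _ _ hN0,
              show (x - a').emod N = (x + c.1 - a).emod N from by
                rw [hxa]; exact Int.add_mul_emod_self_left _ _ _,
              show (y - b').emod N = (y + c.2 - b).emod N from by
                rw [hyb]; exact Int.add_mul_emod_self_left _ _ _]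
            ring_nf
  have hka : a' = a := congrArg Prod.fst hkey
  have hkb : b' = b := congrArg Prod.snd hkey
  have hd1 : N ∣ c.1 := by
    have h1 : (a - c.1) % N = a % N := by
      rw [← ha', hka, Int.emod_eq_of_lt ha0 haN]
    rw [Int.emod_eq_emod_iff_emod_sub_eq_zero] at h1
    have := Int.dvd_of_emod_eq_zero h1
    have h2 : a - c.1 - a = -c.1 := by ring
    rw [h2, Int.dvd_neg] at this
    exact this
  have hd2 : N ∣ c.2 := by
    have h1 : (b - c.2) % N = b % N := by
      rw [← hb', hkb, Int.emod_eq_of_lt hb0 hbN]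
    rw [Int.emod_eq_emod_iff_emod_sub_eq_zero] at h1
    have := Int.dvd_of_emod_eq_zero h1
    have h2 : b - c.2 - b = -c.2 := by ring
    rw [h2, Int.dvd_neg] at this
    exact this
  obtain ⟨d1, hc1⟩ := hd1
  obtain ⟨d2, hc2⟩ := hd2
  have hdm : ∀ i u : ℤ, 0 ≤ i → i < N → (i + N * u) / N = u ∧ (i + N * u) % N = i := by
    intro i u hi0 hiN
    constructor
    · rw [Int.add_mul_ediv_left _ _ hN0, Int.ediv_eq_zero_of_lt hi0 hiN, zero_add]
    · rw [Int.add_mul_emod_self_left, Int.emod_eq_of_lt hi0 hiN]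
  have hval : ∀ u v i j : ℤ, 0 ≤ i → i < N → 0 ≤ j → j < N →
      f (a + (i + N * u), b + (j + N * v)) = M (g (u, v)) i j := by
    intro u v i j hi0 hiN hj0 hjN
    have := hrep (a + (i + N * u)) (b + (j + N * v))
    rw [this]
    rw [show a + (i + N * u) - a = i + N * u from by ring,
      show b + (j + N * v) - b = j + N * v from by ring,
      (hdm i u hi0 hiN).1, (hdm i u hi0 hiN).2,
      (hdm j v hj0 hjN).1, (hdm j v hj0 hjN).2]
  have hperg : ∀ p : ℤ × ℤ, g (p + (d1, d2)) = g p := by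
    rintro ⟨u, v⟩
    apply hMinj
    intro i j hi0 hiN hj0 hjN
    have harg : ((a + (i + N * (u + d1)), b + (j + N * (v + d2))) : ℤ × ℤ)
        = (a + (i + N * u), b + (j + N * v)) + c := by
      simp only [Prod.ext_iff, Prod.fst_add, Prod.snd_add]
      constructor
      · rw [hc1]; ring
      · rw [hc2]; ring
    calc M (g ((u, v) + (d1, d2))) i j
        = M (g (u + d1, v + d2)) i j := by norm_num
      _ = f (a + (i + N * (u + d1)), b + (j + N * (v + d2))) :=
          (hval (u + d1) (v + d2) i j hi0 hiN hj0 hjN).symm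
      _ = f (a + (i + N * u), b + (j + N * v)) := by rw [harg, hper]
      _ = M (g (u, v)) i j := hval u v i j hi0 hiN hj0 hjN
  have hdne : ((d1, d2) : ℤ × ℤ) ≠ 0 := by
    intro h
    apply hc
    have h1 : d1 = 0 := congrArg Prod.fst h
    have h2 : d2 = 0 := congrArg Prod.snd h
    have : c.1 = 0 := by rw [hc1, h1, mul_zero]
    have : c.2 = 0 := by rw [hc2, h2, mul_zero]
    exact Prod.ext ‹c.1 = 0› ‹c.2 = 0›
  have hlt : d1.natAbs + d2.natAbs < n := by
    have hN2 : 2 ≤ N.natAbs := by omega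
    have h1 : 2 * d1.natAbs ≤ c.1.natAbs := by
      rw [hc1, Int.natAbs_mul]; exact Nat.mul_le_mul_right _ hN2
    have h2 : 2 * d2.natAbs ≤ c.2.natAbs := by
      rw [hc2, Int.natAbs_mul]; exact Nat.mul_le_mul_right _ hN2
    have hpos : 0 < d1.natAbs + d2.natAbs := by
      by_contra h
      push_neg at h
      have e1 : d1 = 0 := Int.natAbs_eq_zero.1 (by omega)
      have e2 : d2 = 0 := Int.natAbs_eq_zero.1 (by omega)
      exact hdne (by simp [Prod.ext_iff, e1, e2])
    omega
  exact ih _ hlt g hg (d1, d2) hdne rfl hperg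
end

section
/- If a configuration f : ℤ² → τ can be uniquely partitioned, for every k ≥ 1, into aligned blocks of size N^k × N^k (each level-k grid refining uniquely the level-(k+1) grid), where N > 1, then f is aperiodic: for any nonzero vector c ∈ ℤ², the translate of f by c differs from f. (Key step: a period c would have to be divisible by N^k for all k, forcing c = 0.) -/
/-- If a configuration `f` has, for every `k ≥ 1`, a unique offset in
`[0, N^k)²` determining its level-`k` grid of `N^k × N^k` blocks, and every
translation taking `f` to itself preserves these grids (shifting the offset
modulo `N^k`), then `f` is aperiodic. -/
theorem stmt_14 {τ : Type*} (f : ℤ × ℤ → τ) (N : ℤ) (hN : 1 < N)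
    (G : ℕ → ℤ × ℤ → Prop)
    (huniq : ∀ k : ℕ, 1 ≤ k → ∃! ab : ℤ × ℤ,
      (0 ≤ ab.1 ∧ ab.1 < N ^ k ∧ 0 ≤ ab.2 ∧ ab.2 < N ^ k) ∧ G k ab)
    (htrans : ∀ c : ℤ × ℤ, (∀ p : ℤ × ℤ, f (p + c) = f p) →
      ∀ (k : ℕ) (ab : ℤ × ℤ), G k ab →
        G k ((ab.1 + c.1).emod (N ^ k), (ab.2 + c.2).emod (N ^ k))) :
    ∀ c : ℤ × ℤ, c ≠ 0 → ¬ (∀ p : ℤ × ℤ, f (p + c) = f p) := by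
  intro c hc hper
  have hNk : ∀ k : ℕ, (0:ℤ) < N ^ k := fun k => pow_pos (by omega) k
  -- For every k ≥ 1, N^k divides both coordinates of c.
  have hdvd : ∀ k : ℕ, 1 ≤ k → (N ^ k ∣ c.1) ∧ (N ^ k ∣ c.2) := by
    intro k hk
    obtain ⟨ab, ⟨hbox, hG⟩, huni⟩ := huniq k hk
    have hG' := htrans c hper k ab hG
    have heq : ((ab.1 + c.1).emod (N ^ k), (ab.2 + c.2).emod (N ^ k)) = ab := by
      apply huni
      refine ⟨⟨Int.emod_nonneg _ (ne_of_gt (hNk k)), Int.emod_lt_of_pos _ (hNk k),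
        Int.emod_nonneg _ (ne_of_gt (hNk k)), Int.emod_lt_of_pos _ (hNk k)⟩, hG'⟩
    have h1 : (ab.1 + c.1).emod (N ^ k) = ab.1 := congrArg Prod.fst heq
    have h2 : (ab.2 + c.2).emod (N ^ k) = ab.2 := congrArg Prod.snd heq
    have hm1 : ab.1.emod (N ^ k) = ab.1 := Int.emod_eq_of_lt hbox.1 hbox.2.1
    have hm2 : ab.2.emod (N ^ k) = ab.2 := Int.emod_eq_of_lt hbox.2.2.1 hbox.2.2.2
    constructor
    · have hmod : (ab.1 + c.1) ≡ ab.1 [ZMOD (N ^ k)] := h1.trans hm1.symm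
      have := hmod.dvd
      simpa using this.neg_right
    · have hmod : (ab.2 + c.2) ≡ ab.2 [ZMOD (N ^ k)] := h2.trans hm2.symm
      have := hmod.dvd
      simpa using this.neg_right
  -- A nonzero integer divisible by N^k for all k ≥ 1 is impossible.
  have key : ∀ x : ℤ, (∀ k : ℕ, 1 ≤ k → N ^ k ∣ x) → x = 0 := by
    intro x hx
    by_contra hx0
    obtain ⟨n, hn⟩ := pow_unbounded_of_one_lt (|x|) hN
    have hle : (N : ℤ) ^ n ≤ N ^ (max n 1) :=
      pow_le_pow_right₀ (le_of_lt hN) (le_max_left n 1)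
    have hd : N ^ (max n 1) ∣ |x| := (dvd_abs _ _).mpr (hx _ (le_max_right n 1))
    have := Int.le_of_dvd (abs_pos.mpr hx0) hd
    omega
  have h1 : c.1 = 0 := key c.1 (fun k hk => (hdvd k hk).1)
  have h2 : c.2 = 0 := key c.2 (fun k hk => (hdvd k hk).2)
  exact hc (Prod.ext h1 h2)
end

section
/- If the set of finite patterns of an effective minimal nonempty shift S ⊆ Σ^{ℤ} is decidable, then S contains a computable configuration: there is a computable x : ℤ → Σ all of whose finite factors are globally admissible patterns of S, and hence x ∈ S. -/
open Encodable

/-- Search through a list of candidate pairs `(a, b)` for one such that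
`a :: w ++ [b]` satisfies the (decidable) predicate `d`. -/
def pickExt {A : Type*} (d : List A → Bool) : List (A × A) → List A → List A
  | [], w => w
  | ab :: t, w =>
    if d (ab.1 :: w ++ [ab.2]) then ab.1 :: w ++ [ab.2] else pickExt d t w

theorem pickExt_computable {A : Type*} [Primcodable A] {d : List A → Bool}
    (hd : Computable d) (l : List (A × A)) : Computable (pickExt d l) := by
  induction l with
  | nil => exact Computable.id
  | cons ab t ih =>
    have h1 : Computable fun w : List A => ab.1 :: w ++ [ab.2] :=
      (Primrec.list_cons.comp (Primrec.const ab.1)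
        (Primrec.list_concat.comp Primrec.id (Primrec.const ab.2))).to_comp
    exact ((Computable.cond (hd.comp h1) h1 ih).of_eq fun w => by
      simp [pickExt, Bool.cond_eq_ite])

theorem pickExt_spec {A : Type*} {d : List A → Bool} {l : List (A × A)} {w : List A}
    (h : ∃ ab ∈ l, d (ab.1 :: w ++ [ab.2]) = true) :
    ∃ ab : A × A, pickExt d l w = ab.1 :: w ++ [ab.2] ∧
      d (ab.1 :: w ++ [ab.2]) = true := by
  induction l with
  | nil => simp at h
  | cons c t ih =>
    by_cases hc : d (c.1 :: w ++ [c.2]) = true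
    · exact ⟨c, by simp only [pickExt]; rw [if_pos hc], hc⟩
    · obtain ⟨ab, hab, hd'⟩ := h
      rcases List.mem_cons.mp hab with rfl | hab
      · exact absurd hd' hc
      · obtain ⟨ab', h1, h2⟩ := ih ⟨ab, hab, hd'⟩
        exact ⟨ab', by simp only [pickExt]; rw [if_neg hc]; exact h1, h2⟩

/-- If the language of a nonempty one-dimensional shift is decidable, then
the shift contains a computable configuration. -/
theorem stmt_19 {A : Type*} [Fintype A] [DecidableEq A] [Primcodable A]
    [TopologicalSpace A] [DiscreteTopology A]
    (S : Set (ℤ → A))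
    (hclosed : IsClosed S)
    (hinv : ∀ c : ℤ, ∀ x ∈ S, (fun v => x (v + c)) ∈ S)
    (hne : S.Nonempty)
    (hdec : ComputablePred (fun w : List A => ∃ x ∈ S, ∃ p : ℤ,
      ∀ i : Fin w.length, x (p + (i : ℕ)) = w.get i)) :
    ∃ x : ℤ → A, Computable x ∧ x ∈ S := by
  classical
  set Lang : List A → Prop := fun w => ∃ x ∈ S, ∃ p : ℤ,
    ∀ i : Fin w.length, x (p + (i : ℕ)) = w.get i with hLangdef
  obtain ⟨hD, hcomp⟩ := hdec
  set d : List A → Bool := fun w => @decide (Lang w) (hD w) with hddef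
  have hd_iff : ∀ w, d w = true ↔ Lang w := fun w => by
    simp [hddef, decide_eq_true_iff]
  -- the empty word is in the language
  obtain ⟨z0, hz0⟩ := hne
  have hnil : Lang [] := ⟨z0, hz0, 0, fun i => absurd i.isLt (by simp)⟩
  set a₀ : A := z0 0 with ha₀
  -- every word of the language extends on both sides
  have hext : ∀ w : List A, Lang w → ∃ a b : A, Lang (a :: w ++ [b]) := by
    rintro w ⟨x, hx, p, hp⟩
    refine ⟨x (p - 1), x (p + w.length), x, hx, p - 1, ?_⟩
    rintro ⟨iv, hiv⟩
    have hlen : (x (p - 1) :: w ++ [x (p + w.length)]).length = w.length + 2 := by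
      simp
    rw [hlen] at hiv
    match iv, hiv with
    | 0, _ => simp
    | (j+1), hiv =>
      rcases Nat.lt_or_ge j w.length with hj | hj
      · simp only [List.get_eq_getElem, List.cons_append, List.getElem_cons_succ]
        rw [List.getElem_append_left hj,
          show p - 1 + ((j+1 : ℕ) : ℤ) = p + (j : ℕ) by push_cast; ring]
        simpa using hp ⟨j, hj⟩
      · have hje : j = w.length := by omega
        subst hje
        simp only [List.get_eq_getElem, List.cons_append, List.getElem_cons_succ]
        rw [show p - 1 + ((w.length + 1 : ℕ) : ℤ) = p + (w.length : ℕ) by push_cast; ring]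
        simp
  -- the list of all pairs
  set allP : List (A × A) := (Finset.univ : Finset (A × A)).toList with hallP
  -- one step of the construction
  have hstep : ∀ w : List A, Lang w →
      ∃ a b : A, pickExt d allP w = a :: w ++ [b] ∧ Lang (pickExt d allP w) := by
    intro w hw
    obtain ⟨a, b, hab⟩ := hext w hw
    have hmem : ((a, b) : A × A) ∈ allP := Finset.mem_toList.mpr (Finset.mem_univ _)
    obtain ⟨ab, h1, h2⟩ := pickExt_spec ⟨(a, b), hmem, (hd_iff _).mpr hab⟩
    exact ⟨ab.1, ab.2, h1, by rw [h1]; exact (hd_iff _).mp h2⟩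
  -- the sequence of words
  set F : ℕ → List A := fun n => Nat.rec [] (fun _ ih => pickExt d allP ih) n with hFdef
  have hF0 : F 0 = [] := rfl
  have hFs : ∀ n, F (n + 1) = pickExt d allP (F n) := fun n => rfl
  have hFlang : ∀ n, Lang (F n) := by
    intro n; induction n with
    | zero => exact hnil
    | succ n ih => rw [hFs]; exact (hstep (F n) ih).choose_spec.choose_spec.2
  have hshape : ∀ n, ∃ a b : A, F (n + 1) = a :: F n ++ [b] := by
    intro n
    obtain ⟨a, b, h1, _⟩ := hstep (F n) (hFlang n)
    exact ⟨a, b, by rw [hFs]; exact h1⟩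
  have hlen : ∀ n, (F n).length = 2 * n := by
    intro n; induction n with
    | zero => simp [hF0]
    | succ n ih =>
      obtain ⟨a, b, hE⟩ := hshape n
      rw [hE]; simp [ih]; omega
  -- stability of entries
  have hstab : ∀ n j, j < (F n).length →
      ∀ k, (F (n + k)).getD (j + k) a₀ = (F n).getD j a₀ := by
    intro n j hj k
    induction k with
    | zero => simp
    | succ k ih =>
      obtain ⟨a, b, hE⟩ := hshape (n + k)
      have hjk : j + k < (F (n + k)).length := by
        rw [hlen] at hj ⊢; omega
      have : F (n + (k + 1)) = a :: F (n + k) ++ [b] := by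
        rw [show n + (k + 1) = (n + k) + 1 from rfl, hE]
      rw [this, show j + (k + 1) = (j + k) + 1 from rfl]
      simp only [List.cons_append, List.getD_cons_succ]
      rw [List.getD_append _ _ _ _ hjk]
      exact ih
  -- the configuration
  set u : ℕ → ℕ × ℕ := fun m =>
    if m % 2 = 0 then (m / 2 + 1, m + 1) else (m / 2 + 2, 1) with hudef
  set x : ℤ → A := fun k => (F (u (encode k)).1).getD (u (encode k)).2 a₀ with hxdef
  -- key formula
  have hxF : ∀ (k : ℤ) (n : ℕ), k.natAbs + 1 ≤ n →
      x k = (F n).getD (k + n).toNat a₀ := by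
    intro k n hn
    cases k with
    | ofNat q =>
      have he : encode (Int.ofNat q) = 2 * q := rfl
      have hu : u (encode (Int.ofNat q)) = (q + 1, 2 * q + 1) := by
        have h1 : (2 * q) % 2 = 0 := by omega
        have h2 : (2 * q) / 2 = q := by omega
        rw [he, hudef]; simp [h1, h2]
      have habs : (Int.ofNat q).natAbs = q := rfl
      rw [habs] at hn
      have htn : ((Int.ofNat q : ℤ) + n).toNat = q + n := by
        simp [Int.ofNat_eq_natCast]; omega
      have hj : 2 * q + 1 < (F (q + 1)).length := by rw [hlen (q+1)]; omega
      have := hstab (q + 1) (2 * q + 1) hj (n - (q + 1))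
      rw [show q + 1 + (n - (q + 1)) = n from by omega,
        show 2 * q + 1 + (n - (q + 1)) = q + n from by omega] at this
      rw [hxdef]; simp only [hu, htn]
      exact this.symm
    | negSucc q =>
      have he : encode (Int.negSucc q) = 2 * q + 1 := rfl
      have hu : u (encode (Int.negSucc q)) = (q + 2, 1) := by
        have h1 : (2 * q + 1) % 2 ≠ 0 := by omega
        have h2 : (2 * q + 1) / 2 = q := by omega
        rw [he, hudef]; simp [h1, h2]
      have habs : (Int.negSucc q).natAbs = q + 1 := rfl
      rw [habs] at hn
      have htn : ((Int.negSucc q : ℤ) + n).toNat = n - (q + 1) := by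
        rw [Int.negSucc_eq]; omega
      have hj : 1 < (F (q + 2)).length := by rw [hlen (q+2)]; omega
      have := hstab (q + 2) 1 hj (n - (q + 2))
      rw [show q + 2 + (n - (q + 2)) = n from by omega,
        show 1 + (n - (q + 2)) = n - (q + 1) from by omega] at this
      rw [hxdef]; simp only [hu, htn]
      exact this.symm
  -- x is computable
  have hxcomp : Computable x := by
    have hF : Computable F := by
      have hh : Computable₂ (fun (_ : ℕ) (pr : ℕ × List A) => pickExt d allP pr.2) :=
        Computable.to₂
          ((pickExt_computable hcomp allP).comp (Computable.snd.comp Computable.snd))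
      exact (Computable.nat_rec (Computable.id (α := ℕ))
        (Computable.const ([] : List A)) hh).of_eq fun n => rfl
    have hu : Primrec u := by
      have hmod : Primrec fun m : ℕ => m % 2 :=
        Primrec.nat_mod.comp Primrec.id (Primrec.const 2)
      have hdiv : Primrec fun m : ℕ => m / 2 :=
        Primrec.nat_div.comp Primrec.id (Primrec.const 2)
      exact Primrec.ite (Primrec.eq.comp hmod (Primrec.const 0))
        (Primrec.pair (Primrec.succ.comp hdiv) Primrec.succ)
        (Primrec.pair (Primrec.succ.comp (Primrec.succ.comp hdiv)) (Primrec.const 1))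
    have hgetD : Computable₂ fun (l : List A) (n : ℕ) => l.getD n a₀ :=
      (Primrec.list_getD a₀).to_comp
    have hG : Computable fun pr : ℕ × ℕ => (F pr.1).getD pr.2 a₀ :=
      hgetD.comp (hF.comp Computable.fst) Computable.snd
    exact hG.comp ((hu.comp Primrec.encode).to_comp)
  -- approximations in S
  have happrox : ∀ n : ℕ, ∃ y ∈ S, ∀ k : ℤ, k.natAbs + 1 ≤ n → y k = x k := by
    intro n
    obtain ⟨z, hz, p, hp⟩ := hFlang n
    refine ⟨fun v => z (v + (p + n)), hinv (p + n) z hz, ?_⟩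
    intro k hk
    have hxk := hxF k n hk
    have hkn : (0 : ℤ) < k + n := by omega
    set j : ℕ := (k + n).toNat with hjdef
    have hjZ : (j : ℤ) = k + n := Int.toNat_of_nonneg (by omega)
    have hj : j < (F n).length := by rw [hlen n]; omega
    show z (k + (p + (n : ℤ))) = x k
    have hpz := hp ⟨j, hj⟩
    simp only [List.get_eq_getElem] at hpz
    have h1 : k + (p + n) = p + (j : ℕ) := by rw [hjZ]; ring
    rw [h1, hpz, hxk, List.getD_eq_getElem _ _ hj]
  choose y hyS hy using happrox
  have htend : Filter.Tendsto y Filter.atTop (nhds x) := by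
    rw [tendsto_pi_nhds]
    intro k
    have hev : ∀ᶠ n in Filter.atTop, y n k = x k :=
      Filter.eventually_atTop.mpr ⟨k.natAbs + 1, fun n hn => hy n k hn⟩
    exact Filter.Tendsto.congr' (hev.mono fun n h => h.symm) tendsto_const_nhds
  exact ⟨x, hxcomp, hclosed.mem_of_tendsto htend (Filter.Eventually.of_forall hyS)⟩
end
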